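/- arXiv:1310.0895 — 4 statements merged into one kernel-verified Lean document; each statement's English description precedes it below -/
import Mathlib

section
/- Let A be the associative algebra over ℤ[β] generated by u₁,...,u_{n-1} subject to u_i u_j = u_j u_i for |i-j| ≥ 2, u_i u_{i+1} u_i = u_{i+1} u_i u_{i+1}, and u_i² = β u_i. Setting h_i(x) = 1 + x·u_i, one has the Yang–Baxter-type relation h_i(x) h_{i+1}(x ⊕ y) h_i(y) = h_{i+1}(y) h_i(x ⊕ y) h_{i+1}(x), where x ⊕ y = x + y + βxy. -/
/-! Expanding `(1 + a u)(1 + c v)(1 + b u)` with `u² = βu` collapses the `ab u²` term, so the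
outer factors contribute `(a ⊕ b) u`. Both sides of the relation are products of this shape (with
`u` and `v` exchanged), and after expansion they differ only in the cubic terms `uvu` and `vuv`,
which agree by the braid relation. -/

theorem one_add_smul_sandwich_of_mul_self_eq_smul {S : Type*} [CommRing S] {A : Type*} [Ring A]
    [Algebra S A] {β : S} {u : A} (hu : u * u = β • u) (a b c : S) (v : A) :
    (1 + a • u) * (1 + c • v) * (1 + b • u) =
      1 + (a + b + β * a * b) • u + c • v + (a * c) • (u * v) + (c * b) • (v * u) +
        (a * c * b) • (u * v * u) := by
  simp only [mul_add, add_mul, one_mul, mul_one, smul_mul_assoc, mul_smul_comm, mul_assoc, hu]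
  module

/-- Yang–Baxter-type relation in the Hecke-type algebra.  If `u = u_i` and
`v = u_{i+1}` satisfy the braid relation `uvu = vuv` and the Hecke relations
`u² = βu`, `v² = βv`, then with `h(x,w) = 1 + x·w` and `x ⊕ y = x + y + βxy` one has
`h_i(x) h_{i+1}(x⊕y) h_i(y) = h_{i+1}(y) h_i(x⊕y) h_{i+1}(x)`. -/
theorem yang_baxter {S : Type*} [CommRing S] {A : Type*} [Ring A] [Algebra S A]
    (β x y : S) (u v : A)
    (hbraid : u * v * u = v * u * v)
    (hu : u * u = β • u) (hv : v * v = β • v) :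
    (1 + x • u) * (1 + (x + y + β * x * y) • v) * (1 + y • u) =
      (1 + y • v) * (1 + (x + y + β * x * y) • u) * (1 + x • v) := by
  rw [one_add_smul_sandwich_of_mul_self_eq_smul hu, one_add_smul_sandwich_of_mul_self_eq_smul hv,
    hbraid]
  module
end

section
/- The β-divided difference operators satisfy the braid relations: φ_i φ_{i+1} φ_i = φ_{i+1} φ_i φ_{i+1} for 1 ≤ i ≤ n-2, and φ_i φ_j = φ_j φ_i whenever |i-j| ≥ 2. -/
open MvPolynomial

/-- `IsDD β a b P Q` asserts that `Q` is the β-divided difference `φ(P)` with respect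
to the variables `x_a`, `x_b`, i.e. `(x_a - x_b)·Q = (1+βx_b)P - (1+βx_a)σ(P)`. -/
def IsDD {R : Type*} [CommRing R] {n : ℕ} (β : R) (a b : Fin n)
    (P Q : MvPolynomial (Fin n) R) : Prop :=
  (X a - X b) * Q =
    (1 + C β * X b) * P - (1 + C β * X a) * rename (Equiv.swap a b) P

/-!
Since `x_a - x_b` is a non-zero-divisor, the relation `IsDD β a b P Q` determines `Q`, so it
suffices to compare both sides after multiplying by a product of such differences. Writing
`y_k = 1 + β x_k`, both `φ_{ab} φ_{bc} φ_{ab} P` and `φ_{bc} φ_{ab} φ_{bc} P`, multiplied by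
`(x_a - x_b)(x_b - x_c)(x_a - x_c)`, equal the alternant `∑_{w ∈ S₃} sgn(w) w(y_b y_c² P)`:
the braid words are both the β-analogue `∂_{w₀} ∘ y_b y_c²` of the Demazure formula. For disjoint
pairs, `(x_a - x_b)(x_c - x_d) φ_{cd} φ_{ab} P` is the alternant of `y_b y_d P` over the commuting
swaps `(a b)`, `(c d)`, which is symmetric in the two pairs.
-/

open Equiv

namespace MvPolynomial

theorem isRegular_X_sub_X {σ R : Type*} [CommRing R] {i j : σ} (hij : i ≠ j) :
    IsRegular (X i - X j : MvPolynomial σ R) := by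
  classical
  -- the substitution `x_i ↦ x_i + x_j` is injective and sends `x_i - x_j` to the regular `x_i`
  let shift : MvPolynomial σ R →ₐ[R] MvPolynomial σ R := aeval (Function.update X i (X i + X j))
  let unshift : MvPolynomial σ R →ₐ[R] MvPolynomial σ R := aeval (Function.update X i (X i - X j))
  have hinv : unshift.comp shift = AlgHom.id R _ := by
    ext k
    rcases eq_or_ne k i with rfl | hk
    · simp [shift, unshift, hij.symm]
    · simp [shift, unshift, hk]
  have hshift : shift (X i - X j) = X i := by simp [shift, hij.symm]
  rw [isRegular_iff_mem_nonZeroDivisors]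
  refine mem_nonZeroDivisors_of_injective (f := shift)
    (Function.LeftInverse.injective (g := unshift) fun p => ?_) ?_
  · simpa using AlgHom.congr_fun hinv p
  · rw [hshift, ← isRegular_iff_mem_nonZeroDivisors]
    exact isRegular_X

variable {ι R : Type*} [CommSemiring R] [DecidableEq ι]

theorem rename_rename_swap (σ : Perm ι) (i j : ι) (p : MvPolynomial ι R) :
    rename σ (rename (swap i j) p) = rename (swap (σ i) (σ j)) (rename σ p) := by
  rw [rename_rename, rename_rename, swap_apply_apply]
  congr 1
  ext k
  simp

theorem rename_swap_rename_swap (i j : ι) (p : MvPolynomial ι R) :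
    rename (swap i j) (rename (swap i j) p) = p := by
  rw [rename_rename, ← Perm.coe_mul, swap_mul_self, Perm.coe_one, rename_id_apply]

/-- `∑_{w ∈ S₃} sgn(w) · w(F)` over the permutations of `x_a, x_b, x_c`: with `s = swap a b` and
`t = swap b c`, the last three terms are the `w = s t s`, `t s`, `s t` terms. -/
noncomputable def alternant {R : Type*} [CommRing R] (a b c : ι) (F : MvPolynomial ι R) :
    MvPolynomial ι R :=
  F - rename (swap a b) F - rename (swap b c) F - rename (swap a c) F
    + rename (swap a c) (rename (swap b c) F) + rename (swap b c) (rename (swap a c) F)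

end MvPolynomial

namespace IsDD

variable {R : Type*} [CommRing R] {n : ℕ} {β : R} {a b c d : Fin n}
  {P Q Q₁ Q₂ Q₃ R₁ R₂ R₃ : MvPolynomial (Fin n) R}

protected theorem rename (σ : Perm (Fin n)) (h : IsDD β a b P Q) :
    IsDD β (σ a) (σ b) (rename σ P) (rename σ Q) := by
  unfold IsDD at h ⊢
  simpa only [map_sub, map_mul, map_add, map_one, rename_X, rename_C, rename_rename_swap]
    using congrArg (rename σ) h

theorem rename_swap_self (hab : a ≠ b) (h : IsDD β a b P Q) : rename (swap a b) Q = Q := by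
  have h' := h.rename (swap a b)
  unfold IsDD at h h'
  rw [swap_apply_left, swap_apply_right, swap_comm b a, rename_swap_rename_swap] at h'
  apply (isRegular_X_sub_X hab.symm).left
  linear_combination h' + h

theorem mul_mul_eq_of_disjoint (hac : a ≠ c) (had : a ≠ d) (hbc : b ≠ c) (hbd : b ≠ d)
    (h₁ : IsDD β a b P Q₁) (h₂ : IsDD β c d Q₁ Q₂) :
    (X a - X b) * (X c - X d) * Q₂ =
      (1 + C β * X b) * (1 + C β * X d) * P
        - (1 + C β * X a) * (1 + C β * X d) * rename (swap a b) P
        - (1 + C β * X b) * (1 + C β * X c) * rename (swap c d) P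
        + (1 + C β * X a) * (1 + C β * X c) * rename (swap a b) (rename (swap c d) P) := by
  have h₁' := h₁.rename (swap c d)
  rw [swap_apply_of_ne_of_ne hac had, swap_apply_of_ne_of_ne hbc hbd] at h₁'
  unfold IsDD at h₁ h₂ h₁'
  linear_combination (X a - X b) * h₂ + (1 + C β * X d) * h₁ - (1 + C β * X c) * h₁'

theorem comm_of_disjoint (hab : a ≠ b) (hcd : c ≠ d)
    (hac : a ≠ c) (had : a ≠ d) (hbc : b ≠ c) (hbd : b ≠ d)
    (h₁ : IsDD β a b P Q₁) (h₂ : IsDD β c d Q₁ Q₂) (h₃ : IsDD β c d P R₁) (h₄ : IsDD β a b R₁ R₂) :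
    Q₂ = R₂ := by
  have hQ := mul_mul_eq_of_disjoint hac had hbc hbd h₁ h₂
  have hR := mul_mul_eq_of_disjoint hac.symm hbc.symm had.symm hbd.symm h₃ h₄
  have hst : rename (swap c d) (rename (swap a b) P) =
      rename (swap a b) (rename (swap c d) P) := by
    rw [rename_rename_swap, swap_apply_of_ne_of_ne hac had, swap_apply_of_ne_of_ne hbc hbd]
  apply ((isRegular_X_sub_X hab).mul (isRegular_X_sub_X hcd)).left
  linear_combination hQ - hR - (1 + C β * X a) * (1 + C β * X c) * hst

theorem mul_mul_mul_eq_alternant_left (hab : a ≠ b) (hbc : b ≠ c) (hac : a ≠ c)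
    (h₁ : IsDD β a b P Q₁) (h₂ : IsDD β b c Q₁ Q₂) (h₃ : IsDD β a b Q₂ Q₃) :
    (X a - X b) * (X b - X c) * (X a - X c) * Q₃ =
      alternant a b c ((1 + C β * X b) * (1 + C β * X c) ^ 2 * P) := by
  have hsc : swap a b c = c := swap_apply_of_ne_of_ne hac.symm hbc.symm
  have hta : swap b c a = a := swap_apply_of_ne_of_ne hab hac
  have hub : swap a c b = b := swap_apply_of_ne_of_ne hab.symm hbc
  have hQ₁ := h₁.rename_swap_self hab
  have h₁t := h₁.rename (swap b c)
  have h₁u := h₁.rename (swap a c)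
  have h₂s := h₂.rename (swap a b)
  unfold IsDD at h₁ h₂ h₃ h₁t h₁u h₂s
  rw [hta, swap_apply_left] at h₁t
  rw [swap_apply_left, hub, swap_comm c b] at h₁u
  rw [swap_apply_right, hsc, hQ₁] at h₂s
  unfold alternant
  simp only [map_mul, map_pow, map_add, map_one, rename_X, rename_C, swap_apply_left,
    swap_apply_right, hsc, hta, hub]
  linear_combination (X b - X c) * (X a - X c) * h₃ + (1 + C β * X b) * (X a - X c) * h₂
    - (1 + C β * X a) * (X b - X c) * h₂s + (1 + C β * X c) ^ 2 * h₁
    - (1 + C β * X b) ^ 2 * h₁t - (1 + C β * X a) ^ 2 * h₁u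

theorem mul_mul_mul_eq_alternant_right (hab : a ≠ b) (hbc : b ≠ c) (hac : a ≠ c)
    (h₁ : IsDD β b c P R₁) (h₂ : IsDD β a b R₁ R₂) (h₃ : IsDD β b c R₂ R₃) :
    (X a - X b) * (X b - X c) * (X a - X c) * R₃ =
      alternant a b c ((1 + C β * X b) * (1 + C β * X c) ^ 2 * P) := by
  have hsc : swap a b c = c := swap_apply_of_ne_of_ne hac.symm hbc.symm
  have hta : swap b c a = a := swap_apply_of_ne_of_ne hab hac
  have hub : swap a c b = b := swap_apply_of_ne_of_ne hab.symm hbc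
  have hR₁ := h₁.rename_swap_self hbc
  have h₁s := h₁.rename (swap a b)
  have h₁u := h₁.rename (swap a c)
  have h₂t := h₂.rename (swap b c)
  have hus : rename (swap a c) (rename (swap a b) P) =
      rename (swap b c) (rename (swap a c) P) := by
    rw [rename_rename_swap, swap_apply_left, hub, swap_comm c b]
  have hut : rename (swap a c) (rename (swap b c) P) =
      rename (swap a b) (rename (swap a c) P) := by
    rw [rename_rename_swap, hub, swap_apply_right, swap_comm b a]
  unfold IsDD at h₁ h₂ h₃ h₁s h₁u h₂t
  rw [swap_apply_right, hsc, hus] at h₁s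
  rw [hub, swap_apply_right, swap_comm b a, ← hut] at h₁u
  rw [hta, swap_apply_left, hR₁] at h₂t
  unfold alternant
  simp only [map_mul, map_pow, map_add, map_one, rename_X, rename_C, swap_apply_left,
    swap_apply_right, hsc, hta, hub]
  linear_combination (X a - X b) * (X a - X c) * h₃ + (1 + C β * X c) * (X a - X c) * h₂
    - (1 + C β * X b) * (X a - X b) * h₂t + (1 + C β * X b) * (1 + C β * X c) * h₁
    - (1 + C β * X a) * (1 + C β * X c) * h₁s - (1 + C β * X a) * (1 + C β * X b) * h₁u

theorem braid (hab : a ≠ b) (hbc : b ≠ c) (hac : a ≠ c)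
    (h₁ : IsDD β a b P Q₁) (h₂ : IsDD β b c Q₁ Q₂) (h₃ : IsDD β a b Q₂ Q₃)
    (h₄ : IsDD β b c P R₁) (h₅ : IsDD β a b R₁ R₂) (h₆ : IsDD β b c R₂ R₃) : Q₃ = R₃ :=
  (((isRegular_X_sub_X hab).mul (isRegular_X_sub_X hbc)).mul (isRegular_X_sub_X hac)).left <|
    (mul_mul_mul_eq_alternant_left hab hbc hac h₁ h₂ h₃).trans
      (mul_mul_mul_eq_alternant_right hab hbc hac h₄ h₅ h₆).symm

end IsDD

/-- The β-divided difference operators satisfy the braid relations: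
`φ_i φ_{i+1} φ_i = φ_{i+1} φ_i φ_{i+1}`, and `φ_i φ_j = φ_j φ_i` whenever
`|i - j| ≥ 2`. -/
theorem beta_dd_braid_relations {R : Type*} [CommRing R] (β : R) (n : ℕ) :
    (∀ (i : ℕ) (h2 : i + 2 < n) (P Q₁ Q₂ Q₃ R₁ R₂ R₃ : MvPolynomial (Fin n) R),
      IsDD β ⟨i, by omega⟩ ⟨i + 1, by omega⟩ P Q₁ →
      IsDD β ⟨i + 1, by omega⟩ ⟨i + 2, h2⟩ Q₁ Q₂ →
      IsDD β ⟨i, by omega⟩ ⟨i + 1, by omega⟩ Q₂ Q₃ →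
      IsDD β ⟨i + 1, by omega⟩ ⟨i + 2, h2⟩ P R₁ →
      IsDD β ⟨i, by omega⟩ ⟨i + 1, by omega⟩ R₁ R₂ →
      IsDD β ⟨i + 1, by omega⟩ ⟨i + 2, h2⟩ R₂ R₃ →
      Q₃ = R₃) ∧
    (∀ (i j : ℕ) (hij : i + 2 ≤ j ∨ j + 2 ≤ i) (hi : i + 1 < n) (hj : j + 1 < n)
      (P Q₁ Q₂ R₁ R₂ : MvPolynomial (Fin n) R),
      IsDD β ⟨i, by omega⟩ ⟨i + 1, hi⟩ P Q₁ →
      IsDD β ⟨j, by omega⟩ ⟨j + 1, hj⟩ Q₁ Q₂ →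
      IsDD β ⟨j, by omega⟩ ⟨j + 1, hj⟩ P R₁ →
      IsDD β ⟨i, by omega⟩ ⟨i + 1, hi⟩ R₁ R₂ →
      Q₂ = R₂) := by
  refine ⟨fun i _ _ _ _ _ _ _ _ => ?_, fun i j _ _ _ _ _ _ _ _ => ?_⟩
  · exact IsDD.braid (by simp [Fin.ext_iff]) (by simp [Fin.ext_iff]) (by simp [Fin.ext_iff])
  · exact IsDD.comm_of_disjoint (by simp [Fin.ext_iff]) (by simp [Fin.ext_iff])
      (by simp [Fin.ext_iff]; omega) (by simp [Fin.ext_iff]; omega)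
      (by simp [Fin.ext_iff]; omega) (by simp [Fin.ext_iff]; omega)
end

section
/- The double β-polynomials satisfy the symmetry 𝔥_{ω⁻¹}(x, y) = 𝔥_ω(y, x) for every permutation ω ∈ S_n, where 𝔥_ω denotes the double β-polynomial H_ω(x,y). -/
/-- The length (number of inversions) of a permutation of `Fin n`. -/
def len {n : ℕ} (ω : Equiv.Perm (Fin n)) : ℕ :=
  (Finset.univ.filter fun p : Fin n × Fin n => p.1 < p.2 ∧ ω p.2 < ω p.1).card

/-- The elementary transposition `s_i = (i, i+1)` in `S_n` (0-indexed). -/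
def sgen (n i : ℕ) (hi : i + 1 < n) : Equiv.Perm (Fin n) :=
  Equiv.swap ⟨i, by omega⟩ ⟨i + 1, hi⟩

/-- `h_i(t) = 1 + t·u_i`. -/
noncomputable def hh {S : Type*} [CommRing S] {A : Type*} [Ring A] [Algebra S A]
    (u : ℕ → A) (i : ℕ) (t : S) : A :=
  1 + t • u i

/-- `α_i(t) = h_{n-2}(t) ⋯ h_i(t)` (0-indexed version of `h_{n-1}(t) ⋯ h_i(t)`). -/
noncomputable def alpha {S : Type*} [CommRing S] {A : Type*} [Ring A] [Algebra S A]
    (n : ℕ) (u : ℕ → A) (i : ℕ) (t : S) : A :=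
  ((List.range (n - 1 - i)).map fun k => hh u (n - 2 - k) t).prod

/-- `α̃_i(t) = h_i(t) ⋯ h_{n-2}(t)`. -/
noncomputable def alphaT {S : Type*} [CommRing S] {A : Type*} [Ring A] [Algebra S A]
    (n : ℕ) (u : ℕ → A) (i : ℕ) (t : S) : A :=
  ((List.range (n - 1 - i)).map fun k => hh u (i + k) t).prod

/-- `H(x) = α_0(x_0) α_1(x_1) ⋯ α_{n-2}(x_{n-2})`. -/
noncomputable def Hx {S : Type*} [CommRing S] {A : Type*} [Ring A] [Algebra S A]
    (n : ℕ) (u : ℕ → A) (x : ℕ → S) : A :=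
  ((List.range (n - 1)).map fun i => alpha n u i (x i)).prod

/-- `H̃(y) = α̃_{n-2}(y_{n-2}) ⋯ α̃_0(y_0)`. -/
noncomputable def Ht {S : Type*} [CommRing S] {A : Type*} [Ring A] [Algebra S A]
    (n : ℕ) (u : ℕ → A) (y : ℕ → S) : A :=
  ((List.range (n - 1)).map fun i => alphaT n u (n - 2 - i) (y (n - 2 - i))).prod

/-!
Write `T_ω` for `b ω` and let `ψ` be the linear involution `T_ω ↦ T_{ω⁻¹}`. Mirroring the right
multiplication rule, induction on the length of `ω` gives the left rule: `u_i T_ω = T_{s_i ω}` if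
`s_i` lengthens `ω`, and `β T_ω` otherwise (in the inductive step, `s_i ω' = ω' s_j` when
`ω'` maps `j, j + 1` to `i, i + 1`). The two rules together say `ψ (z u_i) = u_i ψ z`, so `ψ` is an
anti-automorphism fixing every `u_i`. It reverses the products defining `α_i` and `H`, so
`ψ (H(x)) = H̃(x)` and `ψ (H̃(y) H(x)) = H̃(x) H(y)`; comparing coefficients gives the symmetry.
-/

open Equiv

section Permutations

variable {n : ℕ}

@[simp] lemma sgen_mul_sgen {j : ℕ} (hj : j + 1 < n) : sgen n j hj * sgen n j hj = 1 :=
  swap_mul_self _ _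

@[simp] lemma inv_sgen {j : ℕ} (hj : j + 1 < n) : (sgen n j hj)⁻¹ = sgen n j hj :=
  swap_inv _ _

@[simp] lemma symm_sgen {j : ℕ} (hj : j + 1 < n) : (sgen n j hj).symm = sgen n j hj :=
  symm_swap _ _

@[simp] lemma sgen_apply_left {j : ℕ} (hj : j + 1 < n) :
    sgen n j hj ⟨j, by omega⟩ = ⟨j + 1, hj⟩ :=
  swap_apply_left _ _

@[simp] lemma sgen_apply_right {j : ℕ} (hj : j + 1 < n) :
    sgen n j hj ⟨j + 1, hj⟩ = ⟨j, by omega⟩ :=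
  swap_apply_right _ _

lemma sgen_apply_lt_sgen_apply_iff {j : ℕ} (hj : j + 1 < n) {a c : Fin n} (hac : a < c) :
    sgen n j hj a < sgen n j hj c ↔ ¬(a = ⟨j, by omega⟩ ∧ c = ⟨j + 1, hj⟩) := by
  simp only [sgen, swap_apply_def]
  split_ifs <;> simp only [Fin.ext_iff, Fin.lt_def] at * <;> omega

def inversions (ω : Perm (Fin n)) : Finset (Fin n × Fin n) :=
  Finset.univ.filter fun p => p.1 < p.2 ∧ ω p.2 < ω p.1

@[simp] lemma mem_inversions {ω : Perm (Fin n)} {a c : Fin n} :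
    (a, c) ∈ inversions ω ↔ a < c ∧ ω c < ω a := by
  simp [inversions]

lemma len_eq_card_inversions (ω : Perm (Fin n)) : len ω = (inversions ω).card := rfl

lemma inversions_mul_sgen_of_lt {j : ℕ} (hj : j + 1 < n) {ω : Perm (Fin n)}
    (hω : ω ⟨j, by omega⟩ < ω ⟨j + 1, hj⟩) :
    inversions (ω * sgen n j hj) = insert (⟨j, by omega⟩, ⟨j + 1, hj⟩)
      ((inversions ω).map ((sgen n j hj).prodCongr (sgen n j hj)).toEmbedding) := by
  ext ⟨a, c⟩
  simp only [mem_inversions, Finset.mem_insert, Finset.mem_map_equiv, prodCongr_symm,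
    prodCongr_apply, Prod.map, Perm.mul_apply, symm_sgen, Prod.mk.injEq]
  by_cases hp : a = ⟨j, by omega⟩ ∧ c = ⟨j + 1, hj⟩
  · obtain ⟨rfl, rfl⟩ := hp
    simp [hω]
  rcases lt_trichotomy a c with hac | rfl | hca
  · simp [hp, (sgen_apply_lt_sgen_apply_iff hj hac).2 hp, hac]
  · simpa using hp
  · have hsca : sgen n j hj c < sgen n j hj a ∨ c = ⟨j, by omega⟩ ∧ a = ⟨j + 1, hj⟩ := by
      rw [sgen_apply_lt_sgen_apply_iff hj hca]; tauto
    rcases hsca with hsca | ⟨hc, ha⟩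
    · simp [hp, hca.not_gt, hsca.not_gt]
    · simp [hc, ha, hω.not_gt]

lemma len_mul_sgen_of_lt {j : ℕ} (hj : j + 1 < n) {ω : Perm (Fin n)}
    (hω : ω ⟨j, by omega⟩ < ω ⟨j + 1, hj⟩) : len (ω * sgen n j hj) = len ω + 1 := by
  rw [len_eq_card_inversions, inversions_mul_sgen_of_lt hj hω, Finset.card_insert_of_notMem,
    Finset.card_map, len_eq_card_inversions]
  simp [Finset.mem_map_equiv]

lemma len_mul_sgen_eq_add_one_iff {j : ℕ} (hj : j + 1 < n) (ω : Perm (Fin n)) :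
    len (ω * sgen n j hj) = len ω + 1 ↔ ω ⟨j, by omega⟩ < ω ⟨j + 1, hj⟩ := by
  refine ⟨fun h => ?_, len_mul_sgen_of_lt hj⟩
  refine lt_of_le_of_ne (not_lt.1 fun hlt => ?_) (ω.injective.ne (by simp [Fin.ext_iff]))
  have := len_mul_sgen_of_lt hj (ω := ω * sgen n j hj) (by simpa using hlt)
  rw [mul_assoc, sgen_mul_sgen, mul_one] at this
  omega

lemma sgen_mul_eq_mul_sgen {i j : ℕ} (hi : i + 1 < n) (hj : j + 1 < n) {ω : Perm (Fin n)}
    (h₀ : ω ⟨j, by omega⟩ = ⟨i, by omega⟩) (h₁ : ω ⟨j + 1, hj⟩ = ⟨i + 1, hi⟩) :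
    sgen n i hi * ω = ω * sgen n j hj := by
  rw [sgen, sgen, mul_swap_eq_swap_mul, h₀, h₁]

lemma inv_mul_sgen_lt_iff {i j : ℕ} (hi : i + 1 < n) (hj : j + 1 < n) {ω : Perm (Fin n)}
    (hω : ω ⟨j, by omega⟩ < ω ⟨j + 1, hj⟩) :
    (ω * sgen n j hj)⁻¹ ⟨i, by omega⟩ < (ω * sgen n j hj)⁻¹ ⟨i + 1, hi⟩ ↔
      ω⁻¹ ⟨i, by omega⟩ < ω⁻¹ ⟨i + 1, hi⟩ ∧
        ¬(ω ⟨j, by omega⟩ = ⟨i, by omega⟩ ∧ ω ⟨j + 1, hj⟩ = ⟨i + 1, hi⟩) := by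
  simp only [mul_inv_rev, inv_sgen, Perm.mul_apply]
  by_cases h : ω⁻¹ ⟨i, by omega⟩ < ω⁻¹ ⟨i + 1, hi⟩
  · rw [sgen_apply_lt_sgen_apply_iff hj h, Perm.inv_eq_iff_eq, Perm.inv_eq_iff_eq]
    exact ⟨fun hn => ⟨h, fun ⟨h₀, h₁⟩ => hn ⟨h₀.symm, h₁.symm⟩⟩,
      fun ⟨_, hn⟩ ⟨h₀, h₁⟩ => hn ⟨h₀.symm, h₁.symm⟩⟩
  have hne : ω⁻¹ ⟨i + 1, hi⟩ ≠ ω⁻¹ ⟨i, by omega⟩ := by simp [Fin.ext_iff]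
  have hlt : sgen n j hj (ω⁻¹ ⟨i + 1, hi⟩) < sgen n j hj (ω⁻¹ ⟨i, by omega⟩) := by
    refine (sgen_apply_lt_sgen_apply_iff hj ((not_lt.1 h).lt_of_ne hne)).2 ?_
    rintro ⟨h₀, h₁⟩
    rw [Perm.inv_eq_iff_eq] at h₀ h₁
    simp [← h₀, ← h₁, Fin.mk_lt_mk] at hω
  exact iff_of_false hlt.not_gt fun h' => h h'.1

lemma exists_descent {ω : Perm (Fin n)} (hω : ω ≠ 1) :
    ∃ j, ∃ hj : j + 1 < n, ω ⟨j + 1, hj⟩ < ω ⟨j, by omega⟩ := by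
  by_contra! h
  obtain _ | m := n
  · exact hω (Subsingleton.elim _ _)
  refine hω (DFunLike.coe_injective (StrictMono.eq_id (Fin.strictMono_iff_lt_succ.2 fun i => ?_)))
  exact (h i (by simp)).lt_of_ne (ω.injective.ne (by simp [Fin.ext_iff]))

@[elab_as_elim]
lemma Perm.induction_on_ascent {P : Perm (Fin n) → Prop} (one : P 1)
    (mul_sgen : ∀ ω j (hj : j + 1 < n), ω ⟨j, by omega⟩ < ω ⟨j + 1, hj⟩ → P ω →
      P (ω * sgen n j hj)) (ω : Perm (Fin n)) : P ω := by
  induction h : len ω using Nat.strong_induction_on generalizing ω with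
  | _ N ih =>
  by_cases hω : ω = 1
  · exact hω ▸ one
  obtain ⟨j, hj, hd⟩ := exists_descent hω
  have hasc : (ω * sgen n j hj) ⟨j, by omega⟩ < (ω * sgen n j hj) ⟨j + 1, hj⟩ := by
    simpa using hd
  have hlen := len_mul_sgen_of_lt hj hasc
  rw [mul_assoc, sgen_mul_sgen, mul_one] at hlen
  simpa [mul_assoc] using mul_sgen _ j hj hasc (ih _ (by omega) _ rfl)

end Permutations

lemma List.reverse_map_range {α : Type*} (f : ℕ → α) (m : ℕ) :
    ((List.range m).map f).reverse = (List.range m).map fun k => f (m - 1 - k) := by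
  rw [← List.map_reverse, List.range_eq_range', List.reverse_range', List.map_map]
  simp [Function.comp_def, List.range_eq_range']

namespace Module.Basis

variable {ι R M : Type*} [InvolutiveInv ι] [Semiring R] [AddCommMonoid M] [Module R M]
  (b : Basis ι R M)

noncomputable def invEquiv : M ≃ₗ[R] M :=
  b.equiv b (Equiv.inv ι)

@[simp] lemma invEquiv_basis (g : ι) : b.invEquiv (b g) = b g⁻¹ :=
  b.equiv_apply g b _

lemma repr_invEquiv (z : M) (g : ι) : b.repr (b.invEquiv z) g = b.repr z g⁻¹ := by
  have h := b.repr_reindex_apply (x := b.invEquiv z) (e := (Equiv.inv ι).symm) g⁻¹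
  simp only [Equiv.symm_symm, Equiv.inv_apply, inv_inv] at h
  rw [← h]
  exact congrArg (· g⁻¹) ((b.reindex _).repr.apply_symm_apply (b.repr z))

lemma invEquiv_invEquiv (z : M) : b.invEquiv (b.invEquiv z) = z := by
  simpa using LinearEquiv.congr_fun (b.ext' (f₁ := b.invEquiv.trans b.invEquiv)
    (f₂ := LinearEquiv.refl R M) fun g => by simp) z

end Module.Basis

section HeckeBasis

variable {S : Type*} [CommRing S] {A : Type*} [Ring A] [Algebra S A] {n : ℕ}

def IsHeckeBasis (β : S) (u : ℕ → A) (b : Module.Basis (Perm (Fin n)) S A) : Prop :=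
  b 1 = 1 ∧ ∀ ω i (hi : i + 1 < n),
    b ω * u i = if len (ω * sgen n i hi) = len ω + 1 then b (ω * sgen n i hi) else β • b ω

namespace IsHeckeBasis

variable {β : S} {u : ℕ → A} {b : Module.Basis (Perm (Fin n)) S A} (hT : IsHeckeBasis β u b)
include hT

lemma basis_mul_u {i : ℕ} (hi : i + 1 < n) (ω : Perm (Fin n)) :
    b ω * u i =
      if ω ⟨i, by omega⟩ < ω ⟨i + 1, hi⟩ then b (ω * sgen n i hi) else β • b ω := by
  simp only [hT.2 ω i hi, len_mul_sgen_eq_add_one_iff]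

lemma u_eq_basis {i : ℕ} (hi : i + 1 < n) : u i = b (sgen n i hi) := by
  simpa [hT.1, Fin.mk_lt_mk] using hT.basis_mul_u hi 1

lemma u_mul_basis {i : ℕ} (hi : i + 1 < n) (ω : Perm (Fin n)) :
    u i * b ω =
      if ω⁻¹ ⟨i, by omega⟩ < ω⁻¹ ⟨i + 1, hi⟩ then b (sgen n i hi * ω) else β • b ω := by
  induction ω using Perm.induction_on_ascent with
  | one => simp [hT.1, Fin.mk_lt_mk, hT.u_eq_basis hi]
  | mul_sgen ω j hj hasc ih =>
    have hb : b (ω * sgen n j hj) = b ω * u j := by rw [hT.basis_mul_u, if_pos hasc]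
    simp only [hb, ← mul_assoc, ih, inv_mul_sgen_lt_iff hi hj hasc]
    by_cases h : ω⁻¹ ⟨i, by omega⟩ < ω⁻¹ ⟨i + 1, hi⟩
    swap
    · rw [if_neg h, if_neg fun h' => h h'.1, smul_mul_assoc]
    by_cases hex : ω ⟨j, by omega⟩ = ⟨i, by omega⟩ ∧ ω ⟨j + 1, hj⟩ = ⟨i + 1, hi⟩
    · rw [if_pos h, if_neg fun h' => h'.2 hex, sgen_mul_eq_mul_sgen hi hj hex.1 hex.2,
        hT.basis_mul_u hj, if_neg (by simpa using hasc.not_gt), hb]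
    · rw [if_pos h, if_pos ⟨h, hex⟩, hT.basis_mul_u hj, if_pos, mul_assoc]
      exact (sgen_apply_lt_sgen_apply_iff hi hasc).2 (by simpa [Fin.ext_iff] using hex)

lemma invEquiv_mul_u {i : ℕ} (hi : i + 1 < n) (z : A) :
    b.invEquiv (z * u i) = u i * b.invEquiv z := by
  have h : b.invEquiv.toLinearMap ∘ₗ LinearMap.mulRight S (u i) =
      LinearMap.mulLeft S (u i) ∘ₗ b.invEquiv.toLinearMap := b.ext fun σ => by
    simp [hT.basis_mul_u hi, hT.u_mul_basis hi, apply_ite b.invEquiv, mul_inv_rev]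
  exact LinearMap.congr_fun h z

lemma invEquiv_one : b.invEquiv 1 = 1 := by
  rw [← hT.1, b.invEquiv_basis, inv_one]

lemma invEquiv_mul (a c : A) : b.invEquiv (a * c) = b.invEquiv c * b.invEquiv a := by
  suffices h : ∀ τ a, b.invEquiv (a * b τ) = b.invEquiv (b τ) * b.invEquiv a by
    have h' : b.invEquiv.toLinearMap ∘ₗ LinearMap.mulLeft S a =
        LinearMap.mulRight S (b.invEquiv a) ∘ₗ b.invEquiv.toLinearMap := b.ext fun τ => by
      simpa using h τ a
    exact LinearMap.congr_fun h' c
  intro τ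
  induction τ using Perm.induction_on_ascent with
  | one => intro a; rw [hT.1, mul_one, hT.invEquiv_one, one_mul]
  | mul_sgen τ j hj hasc ih =>
    intro a
    have hb : b (τ * sgen n j hj) = b τ * u j := by rw [hT.basis_mul_u, if_pos hasc]
    rw [hb, ← mul_assoc, hT.invEquiv_mul_u hj, hT.invEquiv_mul_u hj, ih, mul_assoc]

lemma invEquiv_list_prod (l : List A) : b.invEquiv l.prod = (l.map b.invEquiv).reverse.prod := by
  induction l with
  | nil => exact hT.invEquiv_one
  | cons a l ih => simp [hT.invEquiv_mul, ih]

lemma invEquiv_u {i : ℕ} (hi : i + 1 < n) : b.invEquiv (u i) = u i := by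
  simpa [hT.invEquiv_one] using hT.invEquiv_mul_u hi 1

lemma invEquiv_hh {i : ℕ} (hi : i + 1 < n) (t : S) : b.invEquiv (hh u i t) = hh u i t := by
  simp [hh, hT.invEquiv_one, hT.invEquiv_u hi]

lemma invEquiv_alpha (i : ℕ) (t : S) : b.invEquiv (alpha n u i t) = alphaT n u i t := by
  rw [alpha, alphaT, hT.invEquiv_list_prod, List.map_map, List.reverse_map_range]
  refine congrArg List.prod (List.map_congr_left fun k hk => ?_)
  rw [List.mem_range] at hk
  simp only [Function.comp_apply, show n - 2 - (n - 1 - i - 1 - k) = i + k by omega,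
    hT.invEquiv_hh (show i + k + 1 < n by omega)]

lemma invEquiv_Hx (x : ℕ → S) : b.invEquiv (Hx n u x) = Ht n u x := by
  rw [Hx, Ht, hT.invEquiv_list_prod, List.map_map, List.reverse_map_range]
  refine congrArg List.prod (List.map_congr_left fun k hk => ?_)
  simp only [Function.comp_apply, show n - 1 - 1 - k = n - 2 - k by omega, hT.invEquiv_alpha]

lemma invEquiv_Ht (y : ℕ → S) : b.invEquiv (Ht n u y) = Hx n u y := by
  rw [← hT.invEquiv_Hx, b.invEquiv_invEquiv]

end IsHeckeBasis

end HeckeBasis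

theorem double_beta_polynomial_symmetry_general
    {S : Type*} [CommRing S] {A : Type*} [Ring A] [Algebra S A]
    (n : ℕ) (β : S) (u : ℕ → A)
    (b : Module.Basis (Equiv.Perm (Fin n)) S A)
    (hb1 : b 1 = 1)
    (hbmul : ∀ (ω : Equiv.Perm (Fin n)) (i : ℕ) (hi : i + 1 < n),
      (len (ω * sgen n i hi) = len ω + 1 → b ω * u i = b (ω * sgen n i hi)) ∧
      (len (ω * sgen n i hi) ≠ len ω + 1 → b ω * u i = β • b ω))
    (x y : ℕ → S) (ω : Equiv.Perm (Fin n)) :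
    b.repr (Ht n u y * Hx n u x) ω⁻¹ = b.repr (Ht n u x * Hx n u y) ω := by
  have hT : IsHeckeBasis β u b := ⟨hb1, fun ω i hi => by
    split_ifs with h
    exacts [(hbmul ω i hi).1 h, (hbmul ω i hi).2 h]⟩
  rw [← b.repr_invEquiv, hT.invEquiv_mul, hT.invEquiv_Hx, hT.invEquiv_Ht]

/-- Symmetry of the double β-polynomials: `𝔥_{ω⁻¹}(x,y) = 𝔥_ω(y,x)`.

The Hecke algebra `A_n^{(β)}` is axiomatised as an algebra `A` over `S` with
generators `u_0, ..., u_{n-2}` satisfying the commutation, braid and Hecke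
relations, together with an `S`-basis `(T_ω)_{ω ∈ S_n}` with `T_1 = 1` and the
usual multiplication rule `T_ω u_i = T_{ωs_i}` if `l(ωs_i) = l(ω)+1` and
`T_ω u_i = β T_ω` otherwise.  The double β-polynomial `H_ω(x,y)` is the
coefficient of `T_ω` in `H(x,y) = H̃(y)H(x)`, and the claim is
`H_{ω⁻¹}(x,y) = H_ω(y,x)`. -/
theorem double_beta_polynomial_symmetry
    {S : Type*} [CommRing S] {A : Type*} [Ring A] [Algebra S A]
    (n : ℕ) (β : S) (u : ℕ → A)
    (hcomm : ∀ i j, i + 2 ≤ j → j ≤ n - 2 → u i * u j = u j * u i)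
    (hbraid : ∀ i, i + 1 ≤ n - 2 → u i * u (i + 1) * u i = u (i + 1) * u i * u (i + 1))
    (hsq : ∀ i, i ≤ n - 2 → u i * u i = β • u i)
    (b : Module.Basis (Equiv.Perm (Fin n)) S A)
    (hb1 : b 1 = 1)
    (hbmul : ∀ (ω : Equiv.Perm (Fin n)) (i : ℕ) (hi : i + 1 < n),
      (len (ω * sgen n i hi) = len ω + 1 → b ω * u i = b (ω * sgen n i hi)) ∧
      (len (ω * sgen n i hi) ≠ len ω + 1 → b ω * u i = β • b ω))
    (x y : ℕ → S) (ω : Equiv.Perm (Fin n)) :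
    b.repr (Ht n u y * Hx n u x) ω⁻¹ = b.repr (Ht n u x * Hx n u y) ω :=
  double_beta_polynomial_symmetry_general n β u b hb1 hbmul x y ω
end

section
/- In the Hecke algebra A_n^{(β)}, for any two scalars x, y the elements α_i(x) and α_i(y) commute: α_i(x)α_i(y) = α_i(y)α_i(x), where α_i(x) = h_{n-1}(x)···h_i(x). -/
/-!
Let `B_t = h_{k-1}(t) ⋯ h_i(t)` and `a = u_k`. Adding one generator at a time, we carry three
facts: `B_x` commutes with `B_y`, `(1 + x a) B_x` commutes with `(1 + y a) B_y`, and the cross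
term `D = y B_x a B_y - x B_y a B_x` satisfies `a D = β D`. The next generator `c = u_{k+1}`
commutes with `B_x` and `B_y`, and the braid and quadratic relations propagate the three facts
from `(a, B_t)` to `(c, (1 + t a) B_t)`. No inverse of `h_i(t)` is used, so `β` and the scalars
are arbitrary elements of a commutative ring.
-/

section CommInvariant

variable {S A : Type*} [CommRing S] [Ring A] [Algebra S A]

def crossTerm (x y : S) (a Bx By : A) : A := y • (Bx * a * By) - x • (By * a * Bx)

structure CommInvariant (β x y : S) (a Bx By : A) : Prop where
  commute : Commute Bx By
  commute_succ : Commute ((1 + x • a) * Bx) ((1 + y • a) * By)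
  mul_crossTerm : a * crossTerm x y a Bx By = β • crossTerm x y a Bx By

theorem commute_one_add_smul (x y : S) (a : A) : Commute (1 + x • a) (1 + y • a) :=
  (Commute.one_left _).add_left <|
    (Commute.one_right _).add_right <| ((Commute.refl a).smul_left x).smul_right y

theorem CommInvariant.one {β : S} (x y : S) {a : A} (ha : a * a = β • a) :
    CommInvariant β x y a 1 1 where
  commute := Commute.one_left 1
  commute_succ := by simpa only [mul_one] using commute_one_add_smul x y a
  mul_crossTerm := by
    simp only [crossTerm, mul_one, one_mul, mul_sub, mul_smul_comm, ha, smul_smul]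
    module

variable {β x y : S} {a c Bx By : A}

/- With `P_t = (1 + t a) B_t` and `D` the cross term, the commutator of `(1 + x c) P_x` and
`(1 + y c) P_y` equals `(1 + (x + y) c + x y a c) [P_x, P_y] - x y c (a D - β D)`. -/
theorem CommInvariant.commute_succ_succ (h : CommInvariant β x y a Bx By)
    (hbraid : a * c * a = c * a * c) (hc : c * c = β • c)
    (hcx : Commute c Bx) (hcy : Commute c By) :
    Commute ((1 + x • c) * ((1 + x • a) * Bx)) ((1 + y • c) * ((1 + y • a) * By)) := by
  have hbraid' (z : A) : a * (c * (a * z)) = c * (a * (c * z)) := by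
    simp only [← mul_assoc, hbraid]
  have hc' (z : A) : c * (c * z) = β • (c * z) := by rw [← mul_assoc, hc, smul_mul_assoc]
  have hP := h.commute_succ.eq
  have hcP := congrArg (c * ·) h.commute_succ.eq
  have hacP := congrArg (a * c * ·) h.commute_succ.eq
  have hcD := congrArg (c * ·) h.mul_crossTerm
  unfold Commute SemiconjBy
  simp only [crossTerm, mul_add, add_mul, mul_sub, one_mul, smul_mul_assoc, mul_smul_comm,
    smul_smul, mul_assoc, hcx.symm.left_comm, hcy.symm.left_comm, h.commute.symm.eq, hbraid',
    hc'] at hP hcP hacP hcD ⊢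
  linear_combination (norm := module) hP + (x + y) • hcP + (x * y) • hacP - (x * y) • hcD

/- If `D'` is the new cross term, then `c D' - β D' = x y a c (a D - β D)`. -/
theorem CommInvariant.mul_crossTerm_succ (h : CommInvariant β x y a Bx By)
    (hbraid : a * c * a = c * a * c) (hc : c * c = β • c)
    (hcx : Commute c Bx) (hcy : Commute c By) :
    c * crossTerm x y c ((1 + x • a) * Bx) ((1 + y • a) * By) =
      β • crossTerm x y c ((1 + x • a) * Bx) ((1 + y • a) * By) := by
  have hbraid' (z : A) : a * (c * (a * z)) = c * (a * (c * z)) := by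
    simp only [← mul_assoc, hbraid]
  have hc' (z : A) : c * (c * z) = β • (c * z) := by rw [← mul_assoc, hc, smul_mul_assoc]
  have hacD := congrArg (a * c * ·) h.mul_crossTerm
  simp only [crossTerm, mul_add, add_mul, mul_sub, one_mul, smul_mul_assoc, mul_smul_comm,
    mul_assoc, hcx.symm.left_comm, hcy.symm.left_comm, h.commute.symm.eq, hbraid', hc'] at hacD ⊢
  linear_combination (norm := module) (x * y) • hacD

theorem CommInvariant.succ (h : CommInvariant β x y a Bx By)
    (hbraid : a * c * a = c * a * c) (hc : c * c = β • c)
    (hcx : Commute c Bx) (hcy : Commute c By) :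
    CommInvariant β x y c ((1 + x • a) * Bx) ((1 + y • a) * By) where
  commute := h.commute_succ
  commute_succ := h.commute_succ_succ hbraid hc hcx hcy
  mul_crossTerm := h.mul_crossTerm_succ hbraid hc hcx hcy

end CommInvariant

section PartialProducts

variable {S A : Type*} [CommRing S] [Ring A] [Algebra S A]

noncomputable def hProd (u : ℕ → A) (i : ℕ) : ℕ → S → A
  | 0, _ => 1
  | d + 1, t => hh u (i + d) t * hProd u i d t

theorem hProd_eq_prod (u : ℕ → A) (i d : ℕ) (t : S) :
    hProd u i d t = ((List.range d).map fun k => hh u (i + d - 1 - k) t).prod := by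
  induction d with
  | zero => rfl
  | succ d ih =>
    rw [hProd, List.range_succ_eq_map, List.map_cons, List.map_map, List.prod_cons, ih]
    congr 2
    refine List.map_congr_left fun k _ => congrArg (hh u · t) ?_
    omega

theorem alpha_eq_hProd (n : ℕ) (u : ℕ → A) (i : ℕ) (t : S) :
    alpha n u i t = hProd u i (n - 1 - i) t := by
  rw [alpha, hProd_eq_prod]
  refine congrArg List.prod (List.map_congr_left fun k hk => ?_)
  grind

theorem commute_hProd {u : ℕ → A} {i d j : ℕ} (h : ∀ k < d, Commute (u j) (u (i + k)))
    (t : S) : Commute (u j) (hProd u i d t) := by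
  induction d with
  | zero => exact Commute.one_right _
  | succ d ih =>
    have hj : Commute (u j) (hh u (i + d) t) :=
      (Commute.one_right _).add_right ((h d d.lt_succ_self).smul_right t)
    exact hj.mul_right (ih fun k hk => h k (by omega))

theorem commInvariant_hProd {n : ℕ} {β : S} {u : ℕ → A}
    (hcomm : ∀ i j, i + 2 ≤ j → j ≤ n - 2 → u i * u j = u j * u i)
    (hbraid : ∀ i, i + 1 ≤ n - 2 → u i * u (i + 1) * u i = u (i + 1) * u i * u (i + 1))
    (hsq : ∀ i, i ≤ n - 2 → u i * u i = β • u i) (x y : S) {i d : ℕ} (hd : i + d ≤ n - 2) :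
    CommInvariant β x y (u (i + d)) (hProd u i d x) (hProd u i d y) := by
  induction d with
  | zero => exact CommInvariant.one x y (hsq i hd)
  | succ d ih =>
    have hc (t : S) : Commute (u (i + d + 1)) (hProd u i d t) :=
      commute_hProd (fun k hk => (hcomm (i + k) (i + d + 1) (by omega) hd).symm) t
    exact (ih (by omega)).succ (hbraid (i + d) hd) (hsq _ hd) (hc x) (hc y)

end PartialProducts

theorem alpha_comm_general {S : Type*} [CommRing S] {A : Type*} [Ring A] [Algebra S A]
    (n : ℕ) (β : S) (u : ℕ → A)
    (hcomm : ∀ i j, i + 2 ≤ j → j ≤ n - 2 → u i * u j = u j * u i)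
    (hbraid : ∀ i, i + 1 ≤ n - 2 → u i * u (i + 1) * u i = u (i + 1) * u i * u (i + 1))
    (hsq : ∀ i, i ≤ n - 2 → u i * u i = β • u i)
    (i : ℕ) (x y : S) :
    alpha n u i x * alpha n u i y = alpha n u i y * alpha n u i x := by
  rw [alpha_eq_hProd, alpha_eq_hProd]
  cases hm : n - 1 - i with
  | zero => rfl
  | succ d => exact (commInvariant_hProd hcomm hbraid hsq x y (by omega)).commute_succ.eq

/-- In the Hecke algebra `A_n^{(β)}` (generators `u_0, ..., u_{n-2}` with the
commutation, braid and Hecke relations), for any two scalars `x, y` the elements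
`α_i(x)` and `α_i(y)` commute: `α_i(x)·α_i(y) = α_i(y)·α_i(x)`. -/
theorem alpha_comm {S : Type*} [CommRing S] {A : Type*} [Ring A] [Algebra S A]
    (n : ℕ) (β : S) (u : ℕ → A)
    (hcomm : ∀ i j, i + 2 ≤ j → j ≤ n - 2 → u i * u j = u j * u i)
    (hbraid : ∀ i, i + 1 ≤ n - 2 → u i * u (i + 1) * u i = u (i + 1) * u i * u (i + 1))
    (hsq : ∀ i, i ≤ n - 2 → u i * u i = β • u i)
    (i : ℕ) (hi : i ≤ n - 2) (x y : S) :
    alpha n u i x * alpha n u i y = alpha n u i y * alpha n u i x :=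
  alpha_comm_general n β u hcomm hbraid hsq i x y
end
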